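/- (Stone–Weierstrass for unital Abelian ℓ-groups on a-spaces.) Let X be a compact a-space with denominator function ζ, and let G be a subgroup and sublattice of C(X) containing the constant function 1, such that: (i) for every x ≠ y in X there exists g ∈ G with g(x) ≠ g(y); and (ii) for every x ∈ X, ζ(x) = lcm{den(g(x)) : g ∈ G} (computed in ℕ ordered by divisibility with 0 as top element). Then G is dense in C(X) with respect to the uniform metric: every f ∈ C(X) is a uniform limit of a sequence in G. -/
import Mathlib


open Filter

open Classical in
/-- The denominator of a real number: the reduced denominator if rational, `0` if irrational. -/
noncomputable def den (r : ℝ) : ℕ :=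
  if h : ∃ q : ℚ, (q : ℝ) = r then h.choose.den else 0

/-- The least common multiple of a set of naturals, computed in `ℕ` ordered by
divisibility with `0` as top element. -/
noncomputable def setLcm (S : Set ℕ) : ℕ :=
  sInf {n | (∀ s ∈ S, s ∣ n) ∧ ∀ m : ℕ, (∀ s ∈ S, s ∣ m) → n ∣ m}

/-- `C(X)`: the set of a-maps from the a-space `(X, ζ)` to `(ℝ, den)`. -/
def AMapSet {X : Type*} [TopologicalSpace X] (ζ : X → ℕ) : Set (X → ℝ) :=
  {f | Continuous f ∧ ∀ x, den (f x) ∣ ζ x}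

lemma den_ratCast (q : ℚ) : den (q : ℝ) = q.den := by
  unfold den
  rw [dif_pos ⟨q, rfl⟩]
  congr 1
  exact Rat.cast_injective (Exists.choose_spec (⟨q, rfl⟩ : ∃ p : ℚ, (p:ℝ) = (q:ℝ)))

lemma den_rat {r : ℝ} {m : ℕ} (hm : m ≠ 0) (h : den r ∣ m) :
    ∃ q : ℚ, (q : ℝ) = r ∧ q.den ∣ m := by
  by_cases hr : ∃ q : ℚ, (q : ℝ) = r
  · obtain ⟨q, hq⟩ := hr
    exact ⟨q, hq, by rwa [← hq, den_ratCast] at h⟩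
  · exfalso
    apply hm
    rw [← Nat.zero_dvd, ← show den r = 0 by unfold den; rw [dif_neg hr]]
    exact h

lemma setLcm_dvd {S : Set ℕ} {n : ℕ} (hn : n ≠ 0) (h : ∀ s ∈ S, s ∣ n) : setLcm S ∣ n := by
  classical
  have hT : (n.divisors.filter (· ∈ S)).lcm id ∈
      {m | (∀ s ∈ S, s ∣ m) ∧ ∀ m' : ℕ, (∀ s ∈ S, s ∣ m') → m ∣ m'} := by
    constructor
    · intro s hs
      exact Finset.dvd_lcm (Finset.mem_filter.mpr ⟨Nat.mem_divisors.mpr ⟨h s hs, hn⟩, hs⟩)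
    · intro m hm
      exact Finset.lcm_dvd fun b hb => hm b (Finset.mem_filter.mp hb).2
  exact (Nat.sInf_mem ⟨_, hT⟩).2 n h

/-- **Stone–Weierstrass for unital Abelian ℓ-groups on a-spaces.**
Let `X` be a compact a-space and `G` a subgroup and sublattice of `C(X)` containing the
constant function `1`, separating points and realising all denominators:
`ζ x = lcm {den (g x) : g ∈ G}`. Then `G` is uniformly dense in `C(X)`. -/
theorem stone_weierstrass_for_aspaces
    {X : Type*} [TopologicalSpace X] [CompactSpace X] (ζ : X → ℕ)
    (G : Set (X → ℝ)) (hGsub : G ⊆ AMapSet ζ)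
    (h0 : (0 : X → ℝ) ∈ G)
    (hneg : ∀ f ∈ G, -f ∈ G)
    (hadd : ∀ f ∈ G, ∀ g ∈ G, f + g ∈ G)
    (hsup : ∀ f ∈ G, ∀ g ∈ G, f ⊔ g ∈ G)
    (hinf : ∀ f ∈ G, ∀ g ∈ G, f ⊓ g ∈ G)
    (h1 : (1 : X → ℝ) ∈ G)
    (hsep : ∀ x y : X, x ≠ y → ∃ g ∈ G, g x ≠ g y)
    (hden : ∀ x : X, ζ x = setLcm ((fun g : X → ℝ => den (g x)) '' G)) :
    ∀ f ∈ AMapSet ζ, ∃ u : ℕ → X → ℝ, (∀ n, u n ∈ G) ∧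
      TendstoUniformly u f atTop := by
  classical
  intro f hf
  obtain ⟨hfc, hfd⟩ := hf
  -- derived closure properties
  have hsub : ∀ g ∈ G, ∀ h ∈ G, g - h ∈ G := by
    intro g hg h hh
    have := hadd g hg (-h) (hneg h hh)
    rwa [← sub_eq_add_neg] at this
  have hsmulN : ∀ (n : ℕ), ∀ g ∈ G, (n : ℕ) • g ∈ G := by
    intro n
    induction n with
    | zero => intro g hg; simpa using h0
    | succ k ih =>
      intro g hg
      have := hadd _ (ih g hg) g hg
      rwa [← succ_nsmul] at this
  have hzsmul1 : ∀ k : ℤ, k • (1 : X → ℝ) ∈ G := by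
    intro k
    rcases k.eq_nat_or_neg with ⟨n, rfl | rfl⟩
    · rw [natCast_zsmul]; exact hsmulN n 1 h1
    · rw [neg_zsmul, natCast_zsmul]; exact hneg _ (hsmulN n 1 h1)
  -- one-point approximation
  have one_point : ∀ (x : X) (ε : ℝ), 0 < ε → ∃ g ∈ G, |g x - f x| < ε := by
    intro x ε hε
    let A : AddSubgroup ℝ :=
      { carrier := (fun g : X → ℝ => g x) '' G
        zero_mem' := ⟨0, h0, rfl⟩
        add_mem' := by
          rintro r s ⟨g, hg, rfl⟩ ⟨h, hh, rfl⟩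
          exact ⟨g + h, hadd g hg h hh, rfl⟩
        neg_mem' := by
          rintro r ⟨g, hg, rfl⟩
          exact ⟨-g, hneg g hg, rfl⟩ }
    rcases A.dense_or_cyclic with hd | ⟨a, ha⟩
    · obtain ⟨b, hbA, hb⟩ := Metric.mem_closure_iff.mp (hd (f x)) ε hε
      obtain ⟨g, hg, rfl⟩ := hbA
      exact ⟨g, hg, by rwa [abs_sub_comm, ← Real.dist_eq]⟩
    · -- cyclic case: exact interpolation
      have h1A : (1 : ℝ) ∈ A := ⟨1, h1, rfl⟩
      rw [ha, AddSubgroup.mem_closure_singleton] at h1A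
      obtain ⟨k, hk⟩ := h1A
      rw [zsmul_eq_mul] at hk
      have hk0 : k ≠ 0 := by rintro rfl; simp at hk
      have hm0 : k.natAbs ≠ 0 := Int.natAbs_ne_zero.mpr hk0
      have ha0 : a ≠ 0 := by rintro rfl; simp at hk
      have hdvd : ∀ s ∈ (fun g : X → ℝ => den (g x)) '' G, s ∣ k.natAbs := by
        rintro s ⟨g, hg, rfl⟩
        have hgA : g x ∈ A := ⟨g, hg, rfl⟩
        rw [ha, AddSubgroup.mem_closure_singleton] at hgA
        obtain ⟨j, hj⟩ := hgA
        rw [zsmul_eq_mul] at hj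
        have hkR : (k : ℝ) ≠ 0 := Int.cast_ne_zero.mpr hk0
        have haval : a = ((k : ℝ))⁻¹ := eq_inv_of_mul_eq_one_right hk
        have hax : g x = ((Rat.divInt j k : ℚ) : ℝ) := by
          rw [Rat.cast_divInt_of_ne_zero _ hkR, ← hj, haval, div_eq_mul_inv]
        show den (g x) ∣ k.natAbs
        rw [hax, den_ratCast]
        exact Int.natCast_dvd_natCast.mp (Int.dvd_natAbs.mpr (Rat.den_dvd j k))
      have hζ : ζ x ∣ k.natAbs := by
        rw [hden x]; exact setLcm_dvd hm0 hdvd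
      obtain ⟨q, hq, hqd⟩ := den_rat hm0 ((hfd x).trans hζ)
      have hqk : (q.den : ℤ) ∣ k := (Int.natCast_dvd_natCast.mpr hqd).trans (Int.natAbs_dvd.mpr dvd_rfl)
      obtain ⟨c, hc⟩ := hqk
      have hfxA : f x ∈ A := by
        rw [ha, AddSubgroup.mem_closure_singleton]
        refine ⟨q.num * c, ?_⟩
        rw [zsmul_eq_mul]
        have hkR : (k : ℝ) ≠ 0 := Int.cast_ne_zero.mpr hk0
        have hcR : (k : ℝ) = (q.den : ℝ) * (c : ℝ) := by exact_mod_cast hc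
        have hc0 : (c : ℝ) ≠ 0 := by
          rintro h
          rw [h, mul_zero] at hcR
          exact hkR hcR
        have hd0 : (q.den : ℝ) ≠ 0 := Nat.cast_ne_zero.mpr q.den_nz
        have haval : a = ((k : ℝ))⁻¹ := eq_inv_of_mul_eq_one_right hk
        rw [haval, ← hq, Rat.cast_def, hcR]
        push_cast
        field_simp
      obtain ⟨g, hg, hgx⟩ := hfxA
      exact ⟨g, hg, by rw [show g x = f x from hgx]; simpa using hε⟩
  -- build elements vanishing at x, positive at y
  have exists_e : ∀ x y : X, (∃ p ∈ G, p x < p y) → ∃ e ∈ G, e x = 0 ∧ 0 < e y := by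
    rintro x y ⟨p, hp, hpxy⟩
    have hd : 0 < p y - p x := sub_pos.mpr hpxy
    obtain ⟨n, hn⟩ := exists_nat_ge (2 / (p y - p x))
    have hn2 : 2 ≤ (n : ℝ) * (p y - p x) := by
      rw [div_le_iff₀ hd] at hn; linarith
    set k : ℤ := -⌊(n : ℝ) * p x⌋ with hk
    set q : X → ℝ := (n : ℕ) • p + k • (1 : X → ℝ) with hqdef
    have hqG : q ∈ G := hadd _ (hsmulN n p hp) _ (hzsmul1 k)
    have hq_eval : ∀ z, q z = (n : ℝ) * p z + (k : ℝ) := by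
      intro z
      simp only [hqdef, Pi.add_apply, Pi.smul_apply, Pi.one_apply]
      rw [nsmul_eq_mul, zsmul_eq_mul, mul_one]
    have hkR : (k : ℝ) = -⌊(n : ℝ) * p x⌋ := by rw [hk]; push_cast; ring
    have hqx0 : 0 ≤ q x := by
      rw [hq_eval, hkR]; linarith [Int.floor_le ((n : ℝ) * p x)]
    have hqx1 : q x < 1 := by
      rw [hq_eval, hkR]; linarith [Int.lt_floor_add_one ((n : ℝ) * p x)]
    have hqy2 : 2 ≤ q y := by
      rw [hq_eval, hkR]
      have hfl : (⌊(n : ℝ) * p x⌋ : ℝ) ≤ (n : ℝ) * p x := Int.floor_le _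
      nlinarith
    refine ⟨q - q ⊓ 1, hsub q hqG _ (hinf q hqG 1 h1), ?_, ?_⟩
    · have : min (q x) 1 = q x := min_eq_left hqx1.le
      simp only [Pi.sub_apply, Pi.inf_apply, Pi.one_apply]
      rw [this]; ring
    · have : min (q y) 1 = 1 := min_eq_right (by linarith)
      simp only [Pi.sub_apply, Pi.inf_apply, Pi.one_apply]
      rw [this]; linarith
  -- using such elements, project functions: equal at x, zero at y
  have kill : ∀ x y : X, (∃ e ∈ G, e y = 0 ∧ 0 < e x) → ∀ g ∈ G,
      ∃ a ∈ G, a x = g x ∧ a y = 0 := by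
    rintro x y ⟨e, he, hey, hex⟩ g hg
    have half : ∀ h ∈ G, ∃ a ∈ G, a x = max (h x) 0 ∧ a y = 0 := by
      intro h hh
      obtain ⟨n, hn⟩ := exists_nat_ge (max (h x) 0 / e x)
      have hne : max (h x) 0 ≤ (n : ℕ) • e x := by
        rw [nsmul_eq_mul]
        rw [div_le_iff₀ hex] at hn
        nlinarith
      refine ⟨((n : ℕ) • e) ⊓ (h ⊔ 0), hinf _ (hsmulN n e he) _ (hsup h hh 0 h0), ?_, ?_⟩
      · simp only [Pi.inf_apply, Pi.smul_apply, Pi.sup_apply, Pi.zero_apply]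
        exact min_eq_right hne
      · simp only [Pi.inf_apply, Pi.smul_apply, Pi.sup_apply, Pi.zero_apply]
        rw [hey, smul_zero]
        exact min_eq_left (le_max_right _ _)
    obtain ⟨a1, ha1, ha1x, ha1y⟩ := half g hg
    obtain ⟨a2, ha2, ha2x, ha2y⟩ := half (-g) (hneg g hg)
    refine ⟨a1 - a2, hsub _ ha1 _ ha2, ?_, ?_⟩
    · simp only [Pi.sub_apply, ha1x, ha2x, Pi.neg_apply]
      rcases le_total (g x) 0 with h | h
      · rw [max_eq_right h, max_eq_left (by linarith)]; ring
      · rw [max_eq_left h, max_eq_right (by linarith)]; ring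
    · simp only [Pi.sub_apply, ha1y, ha2y, sub_zero]
  -- two-point approximation
  have two_point : ∀ (x y : X) (ε : ℝ), 0 < ε →
      ∃ g ∈ G, |g x - f x| < ε ∧ |g y - f y| < ε := by
    intro x y ε hε
    by_cases hxy : x = y
    · obtain ⟨g, hg, hgx⟩ := one_point x ε hε
      exact ⟨g, hg, hgx, hxy ▸ hgx⟩
    · obtain ⟨p, hp, hpne⟩ := hsep x y hxy
      have hlt : ∃ p ∈ G, p x < p y := by
        rcases hpne.lt_or_gt with h | h
        · exact ⟨p, hp, h⟩
        · exact ⟨-p, hneg p hp, by simpa using neg_lt_neg h⟩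
      have hgt : ∃ p ∈ G, p y < p x := by
        rcases hpne.lt_or_gt with h | h
        · exact ⟨-p, hneg p hp, by simpa using neg_lt_neg h⟩
        · exact ⟨p, hp, h⟩
      obtain ⟨g1, hg1, hg1x⟩ := one_point x ε hε
      obtain ⟨g2, hg2, hg2y⟩ := one_point y ε hε
      -- a: equals g1 at x, zero at y; needs e with e y = 0 < e x
      obtain ⟨e1, he1, he1x, he1y⟩ := exists_e y x hgt
      obtain ⟨a, ha, hax, hay⟩ := kill x y ⟨e1, he1, he1x, he1y⟩ g1 hg1
      obtain ⟨e2, he2, he2x, he2y⟩ := exists_e x y hlt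
      obtain ⟨b, hb, hby, hbx⟩ := kill y x ⟨e2, he2, he2x, he2y⟩ g2 hg2
      refine ⟨a + b, hadd a ha b hb, ?_, ?_⟩
      · simp only [Pi.add_apply, hax, hbx, add_zero]; exact hg1x
      · simp only [Pi.add_apply, hay, hby, zero_add]; exact hg2y
  -- global approximation via compactness (Kakutani argument)
  have global : ∀ ε : ℝ, 0 < ε → ∃ g ∈ G, ∀ z, |g z - f z| < ε := by
    intro ε hε
    rcases isEmpty_or_nonempty X with hX | hX
    · exact ⟨0, h0, fun z => (IsEmpty.false z).elim⟩
    choose gp hgpG hgpx hgpy using fun x y : X => two_point x y ε hε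
    have step1 : ∀ x : X, ∃ h ∈ G, (f x - ε < h x) ∧ ∀ z, h z < f z + ε := by
      intro x
      have hcov : (Set.univ : Set X) ⊆ ⋃ y, {z | gp x y z < f z + ε} := by
        intro z _
        exact Set.mem_iUnion.mpr ⟨z, by have := abs_lt.mp (hgpy x z); simpa using by linarith [this.2]⟩
      obtain ⟨t, ht⟩ := isCompact_univ.elim_finite_subcover
        (fun y => {z | gp x y z < f z + ε})
        (fun y => isOpen_lt (hGsub (hgpG x y)).1 (by continuity)) hcov
      have htne : t.Nonempty := by
        obtain ⟨y, hy⟩ := Set.mem_iUnion.mp (ht (Set.mem_univ hX.some))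
        obtain ⟨hyt, -⟩ := Set.mem_iUnion.mp hy
        exact ⟨y, hyt⟩
      refine ⟨t.inf' htne (gp x), Finset.inf'_mem G (fun a ha b hb => hinf a ha b hb) t htne _
        (fun y _ => hgpG x y), ?_, ?_⟩
      · rw [Finset.inf'_apply, Finset.lt_inf'_iff]
        intro y _
        have := abs_lt.mp (hgpx x y)
        linarith [this.1]
      · intro z
        obtain ⟨y, hy⟩ := Set.mem_iUnion.mp (ht (Set.mem_univ z))
        obtain ⟨hyt, hz⟩ := Set.mem_iUnion.mp hy
        rw [Finset.inf'_apply]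
        exact lt_of_le_of_lt (Finset.inf'_le _ hyt) hz
    choose h hhG hhx hhlt using step1
    have hcov2 : (Set.univ : Set X) ⊆ ⋃ x, {z | f z - ε < h x z} :=
      fun z _ => Set.mem_iUnion.mpr ⟨z, hhx z⟩
    obtain ⟨s, hs⟩ := isCompact_univ.elim_finite_subcover
      (fun x => {z | f z - ε < h x z})
      (fun x => isOpen_lt (by continuity) (hGsub (hhG x)).1) hcov2
    have hsne : s.Nonempty := by
      obtain ⟨x, hx⟩ := Set.mem_iUnion.mp (hs (Set.mem_univ hX.some))
      obtain ⟨hxs, -⟩ := Set.mem_iUnion.mp hx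
      exact ⟨x, hxs⟩
    refine ⟨s.sup' hsne h, Finset.sup'_mem G (fun a ha b hb => hsup a ha b hb) s hsne _
      (fun x _ => hhG x), ?_⟩
    intro z
    rw [abs_lt]
    constructor
    · obtain ⟨x, hx⟩ := Set.mem_iUnion.mp (hs (Set.mem_univ z))
      obtain ⟨hxs, hz⟩ := Set.mem_iUnion.mp hx
      rw [Finset.sup'_apply]
      have hle : h x z ≤ s.sup' hsne (fun x => h x z) := Finset.le_sup' (fun x => h x z) hxs
      have hz' : f z - ε < h x z := hz
      linarith
    · have hlt : s.sup' hsne (fun x => h x z) < f z + ε := by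
        rw [Finset.sup'_lt_iff]
        intro x _
        linarith [hhlt x z]
      rw [Finset.sup'_apply]
      linarith
  -- conclude
  choose v hvG hv using fun n : ℕ => global (1 / ((n : ℝ) + 1)) (by positivity)
  refine ⟨v, hvG, ?_⟩
  rw [Metric.tendstoUniformly_iff]
  intro ε hε
  obtain ⟨N, hN⟩ := exists_nat_gt (1 / ε)
  filter_upwards [eventually_ge_atTop N] with n hn x
  rw [Real.dist_eq, abs_sub_comm]
  refine lt_of_lt_of_le (hv n x) ?_
  rw [div_le_iff₀ (by positivity)]
  rw [div_lt_iff₀ hε] at hN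
  have : (N : ℝ) ≤ n := Nat.cast_le.mpr hn
  nlinarith
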